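/- Let k be an integer with k > 1, let a₁ = (l, 0) ∈ A, let b₁ ∈ Ab, let u ∈ A, and let z ∈ ℤ. Then the following condition holds: 'for every integer n there exists v ∈ A such that [b₁^{n}, u] = [b₁^{n·z}, a₁]·[b₁^{n}, [v, b₁^{n}]]' if and only if u = (l·z, 0), i.e. u is the z-th power a₁^{z} of a₁ in G = ℤ[1/k] ⋊ ℤ. Here [x, y] = x⁻¹y⁻¹xy. -/

import Mathlib

/-- The subring `ℤ[1/k] = {z·k^i : z, i ∈ ℤ}` of `ℚ`, as a set. -/
def zkSet (k : ℤ) : Set ℚ := {q | ∃ z i : ℤ, q = (z : ℚ) * (k : ℚ) ^ i}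

theorem zkSet_neg {k : ℤ} {q : ℚ} (hq : q ∈ zkSet k) : -q ∈ zkSet k := by
  obtain ⟨z, i, rfl⟩ := hq
  exact ⟨-z, i, by push_cast; ring⟩

theorem zkSet_mul_zpow {k : ℤ} (hk : (k : ℚ) ≠ 0) {q : ℚ} (hq : q ∈ zkSet k) (j : ℤ) :
    q * (k : ℚ) ^ j ∈ zkSet k := by
  obtain ⟨z, i, rfl⟩ := hq
  exact ⟨z, i + j, by rw [zpow_add₀ hk]; ring⟩

theorem zkSet_add {k : ℤ} (hk : (k : ℚ) ≠ 0) {p q : ℚ}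
    (hp : p ∈ zkSet k) (hq : q ∈ zkSet k) : p + q ∈ zkSet k := by
  obtain ⟨z₁, i₁, rfl⟩ := hp
  obtain ⟨z₂, i₂, rfl⟩ := hq
  rcases le_total i₁ i₂ with h | h
  · refine ⟨z₁ + z₂ * k ^ (i₂ - i₁).toNat, i₁, ?_⟩
    have hpow : ((k : ℚ)) ^ ((i₂ - i₁).toNat) = (k : ℚ) ^ (i₂ - i₁) := by
      rw [← zpow_natCast, Int.toNat_of_nonneg (by omega)]
    push_cast
    rw [hpow]
    have e : (k : ℚ) ^ (i₂ - i₁) * (k : ℚ) ^ i₁ = (k : ℚ) ^ i₂ := by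
      rw [← zpow_add₀ hk, show i₂ - i₁ + i₁ = i₂ from by omega]
    linear_combination (-(z₂ : ℚ)) * e
  · refine ⟨z₂ + z₁ * k ^ (i₁ - i₂).toNat, i₂, ?_⟩
    have hpow : ((k : ℚ)) ^ ((i₁ - i₂).toNat) = (k : ℚ) ^ (i₁ - i₂) := by
      rw [← zpow_natCast, Int.toNat_of_nonneg (by omega)]
    push_cast
    rw [hpow]
    have e : (k : ℚ) ^ (i₁ - i₂) * (k : ℚ) ^ i₂ = (k : ℚ) ^ i₁ := by
      rw [← zpow_add₀ hk, show i₁ - i₂ + i₂ = i₁ from by omega]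
    linear_combination (-(z₁ : ℚ)) * e

/-- The underlying set of the semidirect product `G = ℤ[1/k] ⋊ ℤ` (modelled inside
`ℚ × ℤ`): pairs `(y, m)` with multiplication `(y₁,m₁)(y₂,m₂) = (y₁ + y₂·k^{-m₁}, m₁+m₂)`. -/
@[ext]
structure BSQ (k : ℤ) : Type where
  y : ℚ
  m : ℤ

namespace BSQ

variable {k : ℤ}

instance : Mul (BSQ k) := ⟨fun g h => ⟨g.y + h.y * (k : ℚ) ^ (-g.m), g.m + h.m⟩⟩
instance : One (BSQ k) := ⟨⟨0, 0⟩⟩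
instance : Inv (BSQ k) := ⟨fun g => ⟨-g.y * (k : ℚ) ^ g.m, -g.m⟩⟩

@[simp] theorem mul_y (g h : BSQ k) : (g * h).y = g.y + h.y * (k : ℚ) ^ (-g.m) := rfl
@[simp] theorem mul_m (g h : BSQ k) : (g * h).m = g.m + h.m := rfl
@[simp] theorem one_y : (1 : BSQ k).y = 0 := rfl
@[simp] theorem one_m : (1 : BSQ k).m = 0 := rfl
@[simp] theorem inv_y (g : BSQ k) : g⁻¹.y = -g.y * (k : ℚ) ^ g.m := rfl
@[simp] theorem inv_m (g : BSQ k) : g⁻¹.m = -g.m := rfl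

theorem kq_ne_zero [Fact (1 < k)] : (k : ℚ) ≠ 0 := by
  have h : (1 : ℤ) < k := Fact.out
  have h' : (k : ℤ) ≠ 0 := by omega
  exact_mod_cast h'

private theorem mul_assoc' [Fact (1 < k)] (a b c : BSQ k) : a * b * c = a * (b * c) := by
  ext
  · simp only [mul_y, mul_m, neg_add, zpow_add₀ (kq_ne_zero (k := k))]
    ring
  · simp only [mul_m]
    ring

private theorem one_mul' [Fact (1 < k)] (a : BSQ k) : 1 * a = a := by
  ext <;> simp

private theorem mul_one' [Fact (1 < k)] (a : BSQ k) : a * 1 = a := by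
  ext <;> simp

private theorem inv_mul_cancel' [Fact (1 < k)] (a : BSQ k) : a⁻¹ * a = 1 := by
  ext
  · simp only [mul_y, inv_y, inv_m, one_y, neg_neg]
    ring
  · simp only [mul_m, inv_m, one_m]
    ring

/-- The group structure on `ℤ[1/k] ⋊ ℤ` (here on the ambient `ℚ ⋊ ℤ`). -/
instance [Fact (1 < k)] : Group (BSQ k) where
  mul := (· * ·)
  one := 1
  inv := Inv.inv
  mul_assoc := mul_assoc'
  one_mul := one_mul'
  mul_one := mul_one'
  inv_mul_cancel := inv_mul_cancel'

end BSQ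

/-- The group `G = ℤ[1/k] ⋊ ℤ`, as the subgroup of `ℚ ⋊ ℤ` of pairs whose first
coordinate lies in `ℤ[1/k]`. -/
def bsSubgroup (k : ℤ) [Fact (1 < k)] : Subgroup (BSQ k) where
  carrier := {g | g.y ∈ zkSet k}
  one_mem' := ⟨0, 0, by norm_num⟩
  mul_mem' := by
    intro a b ha hb
    exact zkSet_add BSQ.kq_ne_zero ha (zkSet_mul_zpow BSQ.kq_ne_zero hb _)
  inv_mem' := by
    intro a ha
    exact zkSet_mul_zpow BSQ.kq_ne_zero (zkSet_neg ha) _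

theorem mem_bsSubgroup {k : ℤ} [Fact (1 < k)] {g : BSQ k} (h : g.y ∈ zkSet k) :
    g ∈ bsSubgroup k := h

/-- The set `A = {(y,0) : y ∈ ℤ[1/k]}`. -/
def aSet (k : ℤ) : Set (BSQ k) := {g | g.y ∈ zkSet k ∧ g.m = 0}

/-- The set `Ab = {(y,1) : y ∈ ℤ[1/k]}`. -/
def abSet (k : ℤ) : Set (BSQ k) := {g | g.y ∈ zkSet k ∧ g.m = 1}

/-- The commutator `[x, y] = x⁻¹ y⁻¹ x y` (the paper's convention). -/
def gcomm {k : ℤ} [Fact (1 < k)] (x y : BSQ k) : BSQ k := x⁻¹ * y⁻¹ * x * y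

/-! With `K = kⁿ`, all commutators in the condition lie in `A` and are read off
coordinatewise: the condition at `n` says `u.y (1 - K) = l (1 - K^z) + v.y (K - 1)(1 - K)`.
Since `K^z - 1 - z (K - 1)` is divisible by `(K - 1)²` in `ℤ[1/k]`, for `n ≠ 0` this amounts to
`u.y - l z ∈ (K - 1) ℤ[1/k]`, with `v` determined by the quotient. Conversely an element of
`ℤ[1/k]` lying in `(kⁿ - 1) ℤ[1/k]` for every `n ≥ 1` is `0`: as `kⁿ - 1` is coprime to `k`,
it divides the numerator for every `n`. -/

theorem exists_zpow_sub_one_sub_eq_sq_mul {F : Type*} [Field F] {R : Subring F} {K : F}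
    (hK₀ : K ≠ 0) (hK : K ∈ R) (hK' : K⁻¹ ∈ R) (z : ℤ) :
    ∃ S ∈ R, K ^ z - 1 - z * (K - 1) = (K - 1) ^ 2 * S := by
  induction z using Int.induction_on with
  | zero => exact ⟨0, R.zero_mem, by simp⟩
  | succ m ih =>
    obtain ⟨S, hS, hSeq⟩ := ih
    refine ⟨K * S + m, add_mem (mul_mem hK hS) (by exact_mod_cast intCast_mem R m), ?_⟩
    rw [zpow_add_one₀ hK₀]
    push_cast at hSeq ⊢
    linear_combination K * hSeq
  | pred m ih =>
    obtain ⟨S, hS, hSeq⟩ := ih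
    refine ⟨K⁻¹ * S + (m + 1) * K⁻¹, add_mem (mul_mem hK' hS)
      (mul_mem (by exact_mod_cast intCast_mem R (m + 1)) hK'), ?_⟩
    rw [zpow_sub_one₀ hK₀]
    push_cast at hSeq ⊢
    linear_combination K⁻¹ * hSeq + (1 - (m + 1) * (K - 1)) * mul_inv_cancel₀ hK₀

theorem Int.eq_zero_of_forall_pow_succ_sub_one_dvd {k c : ℤ} (hk : 1 < k)
    (h : ∀ N : ℕ, k ^ (N + 1) - 1 ∣ c) : c = 0 := by
  set N := c.natAbs
  refine Int.eq_zero_of_abs_lt_dvd (h N) ?_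
  have h2k : (2 : ℤ) ^ (N + 1) ≤ k ^ (N + 1) := pow_le_pow_left₀ (by norm_num) (by omega) _
  have h2N : ((N + 1 : ℕ) : ℤ) < 2 ^ (N + 1) := by exact_mod_cast Nat.lt_two_pow_self
  have habs : |c| = N := Int.abs_eq_natAbs c
  omega

section ZkSet

variable {k : ℤ}

theorem zkSet_exists_mul_pow_eq_intCast (hk : k ≠ 0) {q : ℚ} (hq : q ∈ zkSet k) :
    ∃ (s : ℕ) (c : ℤ), q * (k : ℚ) ^ s = c := by
  obtain ⟨a, i, rfl⟩ := hq
  refine ⟨(-i).toNat, a * k ^ i.toNat, ?_⟩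
  have hi : i + (-i).toNat = i.toNat := by omega
  push_cast
  rw [mul_assoc, ← zpow_natCast, ← zpow_natCast, ← zpow_add₀ (by exact_mod_cast hk), hi]

theorem dvd_of_intCast_eq_mul_mem_zkSet (hk : k ≠ 0) {D c : ℤ} (hD : IsCoprime D k)
    {r : ℚ} (hr : r ∈ zkSet k) (h : (c : ℚ) = D * r) : D ∣ c := by
  obtain ⟨t, b, hb⟩ := zkSet_exists_mul_pow_eq_intCast hk hr
  have hct : c * k ^ t = D * b := by
    exact_mod_cast (show (c : ℚ) * (k : ℚ) ^ t = D * b by rw [h, mul_assoc, hb])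
  exact (hD.pow_right (n := t)).dvd_of_dvd_mul_right ⟨b, hct⟩

theorem eq_zero_of_forall_mem_pow_succ_sub_one_mul (hk : 1 < k) {q : ℚ} (hq : q ∈ zkSet k)
    (h : ∀ N : ℕ, ∃ r ∈ zkSet k, q = ((k : ℚ) ^ (N + 1) - 1) * r) : q = 0 := by
  have hk₀ : k ≠ 0 := by omega
  obtain ⟨s, c, hc⟩ := zkSet_exists_mul_pow_eq_intCast hk₀ hq
  suffices c = 0 by
    simpa [this, hk₀] using hc
  refine Int.eq_zero_of_forall_pow_succ_sub_one_dvd hk fun N ↦ ?_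
  obtain ⟨r, hr, rfl⟩ := h N
  refine dvd_of_intCast_eq_mul_mem_zkSet hk₀ ⟨-1, k ^ N, by ring⟩
    (zkSet_mul_zpow (by exact_mod_cast hk₀) hr s) ?_
  rw [← hc, zpow_natCast]
  push_cast
  ring

end ZkSet

def zkSubring (k : ℤ) [Fact (1 < k)] : Subring ℚ where
  carrier := zkSet k
  mul_mem' := by
    rintro _ _ ⟨a, i, rfl⟩ ⟨b, j, rfl⟩
    exact ⟨a * b, i + j, by rw [zpow_add₀ BSQ.kq_ne_zero]; push_cast; ring⟩
  one_mem' := ⟨1, 0, by simp⟩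
  add_mem' := zkSet_add BSQ.kq_ne_zero
  zero_mem' := ⟨0, 0, by simp⟩
  neg_mem' := zkSet_neg

theorem zpow_mem_zkSubring {k : ℤ} [Fact (1 < k)] (n : ℤ) : (k : ℚ) ^ n ∈ zkSubring k :=
  ⟨1, n, by simp⟩

theorem exists_mem_zkSet_zpow_zpow_sub_one_sub_eq_sq_mul {k : ℤ} [Fact (1 < k)] (n z : ℤ) :
    ∃ S ∈ zkSet k,
      ((k : ℚ) ^ n) ^ z - 1 - z * ((k : ℚ) ^ n - 1) = ((k : ℚ) ^ n - 1) ^ 2 * S := by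
  refine exists_zpow_sub_one_sub_eq_sq_mul (zpow_ne_zero n BSQ.kq_ne_zero)
    (zpow_mem_zkSubring n) ?_ z
  rw [← zpow_neg]
  exact zpow_mem_zkSubring (-n)

namespace BSQ

variable {k : ℤ}

theorem mk_zero_mul_mk_zero (a b : ℚ) : (⟨a, 0⟩ * ⟨b, 0⟩ : BSQ k) = ⟨a + b, 0⟩ := by
  ext <;> simp

variable [Fact (1 < k)]

def mHom : BSQ k →* Multiplicative ℤ where
  toFun g := Multiplicative.ofAdd g.m
  map_one' := rfl
  map_mul' _ _ := rfl

theorem zpow_m (g : BSQ k) (n : ℤ) : (g ^ n).m = n * g.m := by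
  simpa [mHom] using congrArg Multiplicative.toAdd (map_zpow mHom g n)

end BSQ

section Commutator

variable {k : ℤ} [Fact (1 < k)]

theorem gcomm_eq_of_m_eq_zero_right (x u : BSQ k) (hu : u.m = 0) :
    gcomm x u = ⟨u.y * (1 - (k : ℚ) ^ x.m), 0⟩ := by
  ext
  · simp only [gcomm, BSQ.mul_y, BSQ.inv_y, neg_mul, hu, zpow_ofNat, pow_zero, mul_one,
      BSQ.inv_m, neg_neg, BSQ.mul_m, neg_zero, add_zero, neg_add_cancel_comm, neg_add_cancel]
    ring
  · simp [gcomm, hu]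

theorem gcomm_eq_of_m_eq_zero_left (v x : BSQ k) (hv : v.m = 0) :
    gcomm v x = ⟨v.y * ((k : ℚ) ^ x.m - 1), 0⟩ := by
  ext
  · simp only [gcomm, BSQ.mul_y, BSQ.inv_y, hv, zpow_ofNat, pow_zero, mul_one, neg_mul,
      BSQ.inv_m, neg_zero, BSQ.mul_m, zero_add, neg_neg, add_zero]
    ring
  · simp [gcomm, hv]

theorem gcomm_condition_iff {b u v : BSQ k} (hb : b.m = 1) (hu : u.m = 0) (hv : v.m = 0)
    (l : ℚ) (n z : ℤ) :
    gcomm (b ^ n) u = gcomm (b ^ (n * z)) ⟨l, 0⟩ * gcomm (b ^ n) (gcomm v (b ^ n)) ↔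
      u.y * (1 - (k : ℚ) ^ n) =
        l * (1 - ((k : ℚ) ^ n) ^ z) + v.y * ((k : ℚ) ^ n - 1) * (1 - (k : ℚ) ^ n) := by
  have hbn : ∀ n : ℤ, (b ^ n).m = n := fun n ↦ by rw [BSQ.zpow_m, hb, mul_one]
  rw [gcomm_eq_of_m_eq_zero_left v _ hv, gcomm_eq_of_m_eq_zero_right _ u hu,
    gcomm_eq_of_m_eq_zero_right _ _ rfl, gcomm_eq_of_m_eq_zero_right _ _ rfl,
    BSQ.mk_zero_mul_mk_zero, hbn, hbn, zpow_mul, BSQ.mk.injEq, and_iff_left rfl]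

end Commutator

/-- **Corollary 10 (definability of integer powers of `a₁`).** For `a₁ = (l,0) ∈ A`,
`b₁ ∈ Ab`, `u ∈ A` and `z ∈ ℤ`: the condition "for every integer `n` there exists
`v ∈ A` with `[b₁^n, u] = [b₁^{n·z}, a₁]·[b₁^n, [v, b₁^n]]`" holds iff
`u = (l·z, 0)`, i.e. `u` is the `z`-th power `a₁^{z}` of `a₁`. -/
theorem commutator_condition_iff_eq_zpow (k : ℤ) [Fact (1 < k)] (l : ℚ)
    (hl : l ∈ zkSet k) (b₁ : BSQ k) (hb : b₁ ∈ abSet k) (u : BSQ k) (hu : u ∈ aSet k)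
    (z : ℤ) :
    (∀ n : ℤ, ∃ v ∈ aSet k,
        gcomm (b₁ ^ n) u =
          gcomm (b₁ ^ (n * z)) (⟨l, 0⟩ : BSQ k) *
            gcomm (b₁ ^ n) (gcomm v (b₁ ^ n))) ↔
      u = (⟨l * (z : ℚ), 0⟩ : BSQ k) := by
  obtain ⟨huy, hum⟩ := hu
  constructor
  · intro h
    have hd : u.y - l * z = 0 := by
      refine eq_zero_of_forall_mem_pow_succ_sub_one_mul Fact.out
        ((zkSubring k).sub_mem huy ((zkSubring k).mul_mem hl (intCast_mem _ z))) fun N ↦ ?_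
      obtain ⟨v, ⟨hvy, hvm⟩, hv⟩ := h (N + 1 : ℕ)
      obtain ⟨S, hS, hSeq⟩ :=
        exists_mem_zkSet_zpow_zpow_sub_one_sub_eq_sq_mul (k := k) (N + 1 : ℕ) z
      rw [gcomm_condition_iff hb.2 hum hvm] at hv
      rw [zpow_natCast] at hv hSeq
      have hK : (k : ℚ) ^ (N + 1) ≠ 1 :=
        (one_lt_pow₀ (by exact_mod_cast Fact.out) N.succ_ne_zero).ne'
      refine ⟨l * S + v.y, (zkSubring k).add_mem ((zkSubring k).mul_mem hl hS) hvy,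
        mul_right_cancel₀ (sub_ne_zero.2 hK.symm) ?_⟩
      linear_combination hv - l * hSeq
    exact BSQ.ext (sub_eq_zero.1 hd) hum
  · rintro rfl n
    obtain ⟨S, hS, hSeq⟩ := exists_mem_zkSet_zpow_zpow_sub_one_sub_eq_sq_mul (k := k) n z
    refine ⟨⟨-(l * S), 0⟩, ⟨(zkSubring k).neg_mem ((zkSubring k).mul_mem hl hS), rfl⟩,
      (gcomm_condition_iff hb.2 rfl rfl _ _ _).2 ?_⟩
    linear_combination l * hSeq
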